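/- In the ring R = ℤ₂[h, r]/(h⁸, 2r, h⁴r, hr², r⁴) with deg h = 2, deg r = 4, the elements r², r³, hr, h²r, h³r are all nonzero, and the ℤ/2-subspace spanned by {r², r³, hr, h²r, h³r} together with the ℤ₂-span of {1, h, ..., h⁷} forms a subring S of R with R/S ≅ ℤ/2 generated by the class of r. -/

import Mathlib

set_option synthInstance.maxHeartbeats 400000
set_option maxHeartbeats 800000

open MvPolynomial

/-- `R = ℤ₂[h, r]/(h⁸, 2r, h⁴r, hr², r⁴)`, with `h = X 0`, `r = X 1`. -/
noncomputable abbrev RQ7 : Type :=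
  MvPolynomial (Fin 2) ℤ_[2] ⧸
    Ideal.span ({X 0 ^ 8, 2 * X 1, X 0 ^ 4 * X 1, X 0 * X 1 ^ 2, X 1 ^ 4} :
      Set (MvPolynomial (Fin 2) ℤ_[2]))

/-- The class of `h^a * r^b` in `RQ7`. -/
noncomputable abbrev hr (a b : ℕ) : RQ7 :=
  Ideal.Quotient.mk _ (X 0 ^ a * X 1 ^ b)

/-- The `ℤ₂`-submodule spanned by `{r², r³, hr, h²r, h³r}` together with
`{1, h, ..., h⁷}` (the image of the cycle map). -/
noncomputable abbrev algPart : Submodule ℤ_[2] RQ7 :=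
  Submodule.span ℤ_[2]
    ((Set.range fun j : Fin 8 => hr (j : ℕ) 0) ∪
      {hr 0 2, hr 0 3, hr 1 1, hr 2 1, hr 3 1})

noncomputable abbrev Iq : Ideal (MvPolynomial (Fin 2) ℤ_[2]) :=
  Ideal.span ({X 0 ^ 8, 2 * X 1, X 0 ^ 4 * X 1, X 0 * X 1 ^ 2, X 1 ^ 4} :
      Set (MvPolynomial (Fin 2) ℤ_[2]))

-- zero lemmas
lemma hr_eq_zero_of {a b : ℕ} (g q : MvPolynomial (Fin 2) ℤ_[2])
    (hg : g ∈ ({X 0 ^ 8, 2 * X 1, X 0 ^ 4 * X 1, X 0 * X 1 ^ 2, X 1 ^ 4} :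
      Set (MvPolynomial (Fin 2) ℤ_[2])))
    (h : X 0 ^ a * X 1 ^ b = g * q) : hr a b = 0 := by
  rw [hr, Ideal.Quotient.eq_zero_iff_mem, h]
  exact Ideal.mul_mem_right _ _ (Ideal.subset_span hg)

lemma hr_zero_h {a b : ℕ} (h : 8 ≤ a) : hr a b = 0 := by
  refine hr_eq_zero_of (X 0 ^ 8) (X 0 ^ (a - 8) * X 1 ^ b) (by simp) ?_
  conv_lhs => rw [show a = 8 + (a - 8) by omega]
  rw [pow_add]; ring

lemma hr_zero_r {a b : ℕ} (h : 4 ≤ b) : hr a b = 0 := by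
  refine hr_eq_zero_of (X 1 ^ 4) (X 0 ^ a * X 1 ^ (b - 4)) (by simp) ?_
  conv_lhs => rw [show b = 4 + (b - 4) by omega]
  rw [pow_add]; ring

lemma hr_zero_hr2 {a b : ℕ} (ha : 1 ≤ a) (hb : 2 ≤ b) : hr a b = 0 := by
  refine hr_eq_zero_of (X 0 * X 1 ^ 2) (X 0 ^ (a - 1) * X 1 ^ (b - 2)) (by simp) ?_
  conv_lhs => rw [show a = 1 + (a - 1) by omega, show b = 2 + (b - 2) by omega]
  rw [pow_add, pow_add]; ring

lemma hr_zero_h4r {a b : ℕ} (ha : 4 ≤ a) (hb : 1 ≤ b) : hr a b = 0 := by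
  refine hr_eq_zero_of (X 0 ^ 4 * X 1) (X 0 ^ (a - 4) * X 1 ^ (b - 1)) (by simp) ?_
  conv_lhs => rw [show a = 4 + (a - 4) by omega, show b = 1 + (b - 1) by omega]
  rw [pow_add, pow_add]; ring

lemma hr_mul (a b c d : ℕ) : hr a b * hr c d = hr (a + c) (b + d) := by
  rw [hr, hr, hr, ← map_mul]
  congr 1
  rw [pow_add, pow_add]; ring

lemma hr_gen_mem (a b : ℕ) (hab : b = 0 ∨ 2 ≤ a + b) : hr a b ∈ algPart := by
  by_cases hb4 : 4 ≤ b
  · rw [hr_zero_r hb4]; exact zero_mem _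
  have hb : b < 4 := by omega
  interval_cases b
  · by_cases ha : a < 8
    · exact Submodule.subset_span (Or.inl ⟨⟨a, ha⟩, rfl⟩)
    · rw [hr_zero_h (by omega)]; exact zero_mem _
  · -- b = 1, a ≥ 1
    have ha1 : 1 ≤ a := by omega
    by_cases ha : a < 4
    · interval_cases a
      · exact Submodule.subset_span (Or.inr (by simp))
      · exact Submodule.subset_span (Or.inr (by simp))
      · exact Submodule.subset_span (Or.inr (by simp))
    · rw [hr_zero_h4r (by omega) (by omega)]; exact zero_mem _
  · rcases Nat.eq_zero_or_pos a with rfl | ha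
    · exact Submodule.subset_span (Or.inr (by simp))
    · rw [hr_zero_hr2 (by omega) (by omega)]; exact zero_mem _
  · rcases Nat.eq_zero_or_pos a with rfl | ha
    · exact Submodule.subset_span (Or.inr (by simp))
    · rw [hr_zero_hr2 (by omega) (by omega)]; exact zero_mem _

lemma gen_shape : ∀ x ∈ ((Set.range fun j : Fin 8 => hr (j : ℕ) 0) ∪
      {hr 0 2, hr 0 3, hr 1 1, hr 2 1, hr 3 1} : Set RQ7),
    ∃ a b : ℕ, x = hr a b ∧ (b = 0 ∨ 2 ≤ a + b) := by
  rintro x (⟨j, rfl⟩ | hx)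
  · exact ⟨j, 0, rfl, Or.inl rfl⟩
  · simp only [Set.mem_insert_iff, Set.mem_singleton_iff] at hx
    rcases hx with rfl | rfl | rfl | rfl | rfl
    · exact ⟨0, 2, rfl, Or.inr (by omega)⟩
    · exact ⟨0, 3, rfl, Or.inr (by omega)⟩
    · exact ⟨1, 1, rfl, Or.inr (by omega)⟩
    · exact ⟨2, 1, rfl, Or.inr (by omega)⟩
    · exact ⟨3, 1, rfl, Or.inr (by omega)⟩

lemma one_mem_algPart : (1 : RQ7) ∈ algPart := by
  have h : hr 0 0 = 1 := by simp [hr]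
  rw [← h]; exact hr_gen_mem 0 0 (Or.inl rfl)

lemma algPart_mul_mem : ∀ x y : RQ7, x ∈ algPart → y ∈ algPart → x * y ∈ algPart := by
  have hle : algPart * algPart ≤ algPart := by
    rw [Submodule.span_mul_span]
    refine Submodule.span_le.mpr ?_
    rintro z hz
    rw [Set.mem_mul] at hz
    obtain ⟨x, hx, y, hy, rfl⟩ := hz
    obtain ⟨a, b, rfl, hab⟩ := gen_shape x hx
    obtain ⟨c, d, rfl, hcd⟩ := gen_shape y hy
    rw [hr_mul]
    exact hr_gen_mem _ _ (by omega)
  intro x y hx hy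
  exact hle (Submodule.mul_mem_mul hx hy)

noncomputable abbrev An (n : ℕ) : Type := AdjoinRoot ((Polynomial.X : Polynomial (ZMod 2)) ^ n)

noncomputable instance instPadA (n : ℕ) : Algebra ℤ_[2] (An n) :=
  ((algebraMap (ZMod 2) (An n)).comp PadicInt.toZMod).toAlgebra

lemma An_algebraMap (n : ℕ) (z : ℤ_[2]) :
    algebraMap ℤ_[2] (An n) z = AdjoinRoot.mk _ (Polynomial.C (PadicInt.toZMod z)) := by
  rfl

lemma An_two (n : ℕ) : (2 : An n) = 0 := by
  rw [← map_ofNat (algebraMap (ZMod 2) (An n)) 2, show (2 : ZMod 2) = 0 from rfl, map_zero]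

lemma root_pow_eq_zero (n k : ℕ) (h : n ≤ k) :
    (AdjoinRoot.root ((Polynomial.X : Polynomial (ZMod 2)) ^ n)) ^ k = 0 := by
  rw [← AdjoinRoot.mk_X, ← map_pow, AdjoinRoot.mk_eq_zero]
  exact pow_dvd_pow _ h

lemma root_pow_ne_zero (n k : ℕ) (h : k < n) :
    (AdjoinRoot.root ((Polynomial.X : Polynomial (ZMod 2)) ^ n)) ^ k ≠ 0 := by
  rw [← AdjoinRoot.mk_X, ← map_pow, Ne, AdjoinRoot.mk_eq_zero, Polynomial.X_pow_dvd_iff]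
  intro hc
  have := hc k h
  rw [Polynomial.coeff_X_pow, if_pos rfl] at this
  exact one_ne_zero this

lemma gen_vanish {n : ℕ} (f : Fin 2 → An n)
    (h8 : f 0 ^ 8 = 0) (h41 : f 0 ^ 4 * f 1 = 0) (h12 : f 0 * f 1 ^ 2 = 0)
    (h4 : f 1 ^ 4 = 0) :
    ∀ a ∈ Iq, MvPolynomial.aeval f a = 0 := by
  intro a ha
  have hker : Iq ≤ RingHom.ker (MvPolynomial.aeval f).toRingHom := by
    refine Ideal.span_le.mpr ?_
    intro x hx
    simp only [Set.mem_insert_iff, Set.mem_singleton_iff] at hx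
    rw [SetLike.mem_coe, RingHom.mem_ker]
    rcases hx with rfl | rfl | rfl | rfl | rfl <;>
      simp [h8, h41, h12, h4, An_two]
  exact RingHom.mem_ker.mp (hker ha)

noncomputable def Phi4 : RQ7 →ₐ[ℤ_[2]] An 4 :=
  Ideal.Quotient.liftₐ Iq (MvPolynomial.aeval ![0, AdjoinRoot.root _])
    (gen_vanish _ (by simp) (by simp) (by simp)
      (by simpa using root_pow_eq_zero 4 4 le_rfl))

noncomputable def Phi8 : RQ7 →ₐ[ℤ_[2]] An 8 :=
  Ideal.Quotient.liftₐ Iq (MvPolynomial.aeval ![AdjoinRoot.root _, (AdjoinRoot.root _) ^ 4])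
    (gen_vanish _
      (by simpa using root_pow_eq_zero 8 8 le_rfl)
      (by simpa [← pow_add] using root_pow_eq_zero 8 8 le_rfl)
      (by
        have h9 := root_pow_eq_zero 8 9 (by norm_num)
        rw [show (9 : ℕ) = 1 + 4 * 2 by norm_num, pow_add, pow_mul, pow_one] at h9
        simpa using h9)
      (by simpa [← pow_mul] using root_pow_eq_zero 8 16 (by norm_num)))

lemma Phi4_hr (a b : ℕ) : Phi4 (hr a b) =
    (0 : An 4) ^ a * (AdjoinRoot.root _) ^ b := by
  simp [Phi4, hr, Ideal.Quotient.liftₐ_apply, Ideal.Quotient.lift_mk]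
  erw [Ideal.Quotient.lift_mk, Ideal.Quotient.lift_mk]; simp

lemma Phi8_hr (a b : ℕ) : Phi8 (hr a b) =
    (AdjoinRoot.root _) ^ a * ((AdjoinRoot.root _) ^ 4) ^ b := by
  simp [Phi8, hr, Ideal.Quotient.liftₐ_apply, Ideal.Quotient.lift_mk]
  erw [Ideal.Quotient.lift_mk, Ideal.Quotient.lift_mk]; simp

lemma hr02_ne : hr 0 2 ≠ 0 := by
  intro h
  have := Phi4_hr 0 2
  rw [h, map_zero] at this
  exact root_pow_ne_zero 4 2 (by norm_num) (by simpa using this.symm)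

lemma hr03_ne : hr 0 3 ≠ 0 := by
  intro h
  have := Phi4_hr 0 3
  rw [h, map_zero] at this
  exact root_pow_ne_zero 4 3 (by norm_num) (by simpa using this.symm)

lemma hrk1_ne (k : ℕ) (hk : k < 4) : hr k 1 ≠ 0 := by
  intro h
  have := Phi8_hr k 1
  rw [h, map_zero] at this
  rw [pow_one, ← pow_add] at this
  exact root_pow_ne_zero 8 (k + 4) (by omega) this.symm

lemma r_not_mem_algPart : hr 0 1 ∉ algPart := by
  intro hmem
  set rt : An 4 := AdjoinRoot.root _ with hrt
  have himg : Phi4 (hr 0 1) ∈ Submodule.map Phi4.toLinearMap algPart :=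
    ⟨_, hmem, rfl⟩
  rw [Submodule.map_span] at himg
  have hsub : Phi4.toLinearMap ''
      ((Set.range fun j : Fin 8 => hr (j : ℕ) 0) ∪
        {hr 0 2, hr 0 3, hr 1 1, hr 2 1, hr 3 1}) ⊆
      ({0, 1, rt ^ 2, rt ^ 3} : Set (An 4)) := by
    rintro z ⟨x, hx, rfl⟩
    obtain ⟨a, b, rfl, hab⟩ := gen_shape x hx
    rw [AlgHom.toLinearMap_apply, Phi4_hr]
    rcases Nat.eq_zero_or_pos a with rfl | ha
    · rcases (by omega : b = 0 ∨ b = 2 ∨ b = 3 ∨ 4 ≤ b) with rfl | rfl | rfl | hb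
      · simp
      · simp [hrt]
      · simp [hrt]
      · simp [root_pow_eq_zero 4 b hb]
    · simp [zero_pow (by omega : a ≠ 0)]
  have hphi : Phi4 (hr 0 1) = rt := by rw [Phi4_hr]; simp [hrt]
  have hroot : rt ∈ Submodule.span ℤ_[2] ({0, 1, rt ^ 2, rt ^ 3} : Set (An 4)) := by
    have h0 := Submodule.span_le.mpr
      (fun y hy => Submodule.subset_span (hsub hy)) himg
    rwa [hphi] at h0
  rw [Submodule.mem_span_insert] at hroot
  obtain ⟨z0, y0, hy0, he0⟩ := hroot
  rw [Submodule.mem_span_insert] at hy0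
  obtain ⟨z1, y1, hy1, he1⟩ := hy0
  rw [Submodule.mem_span_insert] at hy1
  obtain ⟨z2, y2, hy2, he2⟩ := hy1
  rw [Submodule.mem_span_singleton] at hy2
  obtain ⟨z3, hy3⟩ := hy2
  rw [he2, ← hy3] at he1
  rw [he1] at he0
  have hsm : ∀ (z : ℤ_[2]) (w : An 4), z • w =
      AdjoinRoot.mk _ (Polynomial.C (PadicInt.toZMod z)) * w := by
    intro z w
    rw [Algebra.smul_def, An_algebraMap]
  rw [hsm, hsm, hsm, hsm] at he0
  set c1 := PadicInt.toZMod z1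
  set c2 := PadicInt.toZMod z2
  set c3 := PadicInt.toZMod z3
  have hmk : AdjoinRoot.mk ((Polynomial.X : Polynomial (ZMod 2)) ^ 4)
      (Polynomial.X - (Polynomial.C c1 + Polynomial.C c2 * Polynomial.X ^ 2
        + Polynomial.C c3 * Polynomial.X ^ 3)) = 0 := by
    rw [map_sub, map_add, map_add, map_mul, map_mul, map_pow, map_pow,
      AdjoinRoot.mk_X, ← hrt]
    linear_combination he0
  rw [AdjoinRoot.mk_eq_zero, Polynomial.X_pow_dvd_iff] at hmk
  have h1 := hmk 1 (by norm_num)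
  simp [Polynomial.coeff_X_one, Polynomial.coeff_C, Polynomial.coeff_X_pow] at h1

noncomputable abbrev Mfull : Submodule ℤ_[2] RQ7 :=
  Submodule.span ℤ_[2]
    (((Set.range fun j : Fin 8 => hr (j : ℕ) 0) ∪
      {hr 0 2, hr 0 3, hr 1 1, hr 2 1, hr 3 1}) ∪ {hr 0 1})

lemma algPart_le_Mfull : algPart ≤ Mfull :=
  Submodule.span_mono Set.subset_union_left

lemma hr_mem_Mfull (a b : ℕ) : hr a b ∈ Mfull := by
  by_cases h : b = 0 ∨ 2 ≤ a + b
  · exact algPart_le_Mfull (hr_gen_mem a b h)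
  · have hb : b = 1 ∧ a = 0 := by omega
    obtain ⟨rfl, rfl⟩ := hb
    exact Submodule.subset_span (Or.inr rfl)

lemma gen_shape' : ∀ x ∈ (((Set.range fun j : Fin 8 => hr (j : ℕ) 0) ∪
      {hr 0 2, hr 0 3, hr 1 1, hr 2 1, hr 3 1}) ∪ {hr 0 1} : Set RQ7),
    ∃ a b : ℕ, x = hr a b := by
  rintro x (hx | rfl)
  · obtain ⟨a, b, rfl, -⟩ := gen_shape x hx
    exact ⟨a, b, rfl⟩
  · exact ⟨0, 1, rfl⟩

lemma mk_X_eq (i : Fin 2) :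
    Ideal.Quotient.mk Iq (X i) = hr (if i = 0 then 1 else 0) (if i = 0 then 0 else 1) := by
  fin_cases i <;> simp [hr]

lemma Mfull_mul_X (i : Fin 2) : ∀ x ∈ Mfull, x * Ideal.Quotient.mk Iq (X i) ∈ Mfull := by
  intro x hx
  induction hx using Submodule.span_induction with
  | mem z hz =>
    obtain ⟨a, b, rfl⟩ := gen_shape' z hz
    rw [mk_X_eq, hr_mul]
    exact hr_mem_Mfull _ _
  | zero => rw [zero_mul]; exact zero_mem _
  | add u v _ _ hu hv => rw [add_mul]; exact add_mem hu hv
  | smul c u _ hu => rw [smul_mul_assoc]; exact Submodule.smul_mem _ _ hu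

lemma Mfull_eq_top : Mfull = ⊤ := by
  rw [eq_top_iff]
  intro x hx
  obtain ⟨p, rfl⟩ := Ideal.Quotient.mk_surjective (I := Iq) x
  clear hx
  induction p using MvPolynomial.induction_on with
  | C a =>
    have h1 : (C a : MvPolynomial (Fin 2) ℤ_[2]) = a • 1 := by
      rw [smul_eq_C_mul, mul_one]
    rw [h1, ← Ideal.Quotient.mkₐ_eq_mk ℤ_[2], map_smul]
    refine Submodule.smul_mem _ _ ?_
    have h2 : (Ideal.Quotient.mkₐ ℤ_[2] Iq) 1 = hr 0 0 := by simp [hr]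
    rw [h2]; exact hr_mem_Mfull 0 0
  | add p q hp hq => rw [map_add]; exact add_mem hp hq
  | mul_X p i hp => rw [map_mul]; exact Mfull_mul_X i _ hp

lemma two_smul_mem (y : RQ7) : (2 : ℤ_[2]) • y ∈ algPart := by
  have hy : y ∈ Mfull := Mfull_eq_top ▸ Submodule.mem_top
  induction hy using Submodule.span_induction with
  | mem z hz =>
    rcases hz with hz | rfl
    · exact Submodule.smul_mem _ _ (Submodule.subset_span hz)
    · have h2 : (2 : ℤ_[2]) • hr 0 1 = Ideal.Quotient.mk Iq (2 * X 1) := by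
        rw [hr, ← Ideal.Quotient.mkₐ_eq_mk ℤ_[2], ← map_smul]
        congr 1
        rw [smul_eq_C_mul, show (C (2 : ℤ_[2]) : MvPolynomial (Fin 2) ℤ_[2]) = 2 from map_ofNat _ 2]
        ring
      rw [h2, Ideal.Quotient.eq_zero_iff_mem.mpr (Ideal.subset_span (by simp))]
      exact zero_mem _
  | zero => rw [smul_zero]; exact zero_mem _
  | add u v _ _ hu hv => rw [smul_add]; exact add_mem hu hv
  | smul c u _ hu => rw [smul_comm]; exact Submodule.smul_mem _ _ hu

/-- In `R = ℤ₂[h, r]/(h⁸, 2r, h⁴r, hr², r⁴)`, the elements `r², r³, hr, h²r, h³r`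
are nonzero, the span of `{r², r³, hr, h²r, h³r} ∪ {1, h, ..., h⁷}` is a subring
`S` of `R`, and `R/S ≅ ℤ/2` generated by the class of `r`. -/
theorem etale_cohomology_Q7 :
    (hr 0 2 ≠ 0 ∧ hr 0 3 ≠ 0 ∧ hr 1 1 ≠ 0 ∧ hr 2 1 ≠ 0 ∧ hr 3 1 ≠ 0) ∧
    (∃ B : Subalgebra ℤ_[2] RQ7, Subalgebra.toSubmodule B = algPart) ∧
    (algPart.mkQ (hr 0 1) ≠ 0 ∧
      Submodule.span ℤ_[2] {algPart.mkQ (hr 0 1)} = ⊤ ∧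
      ∀ x : RQ7 ⧸ algPart, (2 : ℤ_[2]) • x = 0) := by
  refine ⟨⟨hr02_ne, hr03_ne, hrk1_ne 1 (by norm_num), hrk1_ne 2 (by norm_num),
      hrk1_ne 3 (by norm_num)⟩, ?_, ?_, ?_, ?_⟩
  · exact ⟨algPart.toSubalgebra one_mem_algPart algPart_mul_mem, rfl⟩
  · rw [Submodule.mkQ_apply, Ne, Submodule.Quotient.mk_eq_zero]
    exact r_not_mem_algPart
  · refine le_antisymm le_top ?_
    have hmap : Submodule.map algPart.mkQ Mfull = ⊤ := by
      rw [Mfull_eq_top, Submodule.map_top, Submodule.range_mkQ]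
    rw [← hmap, Submodule.map_span]
    refine Submodule.span_le.mpr ?_
    rintro z ⟨x, hx, rfl⟩
    rcases hx with hx | rfl
    · have h0 : algPart.mkQ x = 0 := by
        rw [Submodule.mkQ_apply, Submodule.Quotient.mk_eq_zero]
        exact Submodule.subset_span hx
      rw [h0]
      exact zero_mem _
    · exact Submodule.subset_span rfl
  · intro x
    obtain ⟨y, rfl⟩ := Submodule.mkQ_surjective algPart x
    rw [← map_smul, Submodule.mkQ_apply, Submodule.Quotient.mk_eq_zero]
    exact two_smul_mem y
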